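/- arXiv:2002.11081 — 6 statements merged into one kernel-verified Lean document; each statement's English description precedes it below -/
import Mathlib

section
/- If θ is irrational with convergent denominators (q_n) satisfying q_n^{-1} log q_{n+1} → ∞, then for any subsequence (q'_n) of (q_n) and any bounded complex sequence u, the power series φ(z) = z e^{2πiθ} Σ_{n≥0} u_{q'_n}(1 - e^{2πi q'_n θ}) z^{q'_n} has infinite radius of convergence, i.e. defines an entire function. -/
open Real Complex Filter

/-- If `θ` is irrational with convergent denominators `(q n)` satisfying
`(log q (n+1)) / q n → ∞`, then for any subsequence `q ∘ s` of `(q n)` and any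
bounded complex sequence `u`, the power series
`φ(z) = z e^{2πiθ} Σ_n u_{q'_n} (1 - e^{2πi q'_n θ}) z^{q'_n}`
converges for every `z ∈ ℂ`, i.e. it has infinite radius of convergence and
defines an entire function. -/
theorem phi_entire
    (θ : ℝ) (hθ : Irrational θ)
    (p : ℕ → ℤ) (q : ℕ → ℕ)
    (hq : ∀ n, 0 < q n)
    (happrox : ∀ n, |θ - (p n : ℝ) / (q n : ℝ)| ≤ 1 / ((q n : ℝ) * (q (n + 1) : ℝ)))
    (hgrowth : Tendsto (fun n => Real.log (q (n + 1)) / (q n : ℝ)) atTop atTop)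
    (s : ℕ → ℕ) (hs : StrictMono s)
    (u : ℕ → ℂ) (hu : ∃ C, ∀ n, ‖u n‖ ≤ C) :
    ∀ z : ℂ, Summable (fun n =>
      z * Complex.exp (2 * Real.pi * Complex.I * (θ : ℂ)) *
        (u (q (s n)) * (1 - Complex.exp (2 * Real.pi * Complex.I * (q (s n) : ℂ) * (θ : ℂ)))
          * z ^ (q (s n)))) := by
  obtain ⟨C, hC⟩ := hu
  have hC0 : 0 ≤ C := (norm_nonneg _).trans (hC 0)
  intro z
  set r := ‖z‖ with hrdef
  have hr0 : 0 ≤ r := norm_nonneg z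
  have hqpos : ∀ k, (0:ℝ) < (q k : ℝ) := fun k => by exact_mod_cast hq k
  have hq1 : ∀ k, (1:ℝ) ≤ (q k : ℝ) := fun k => by exact_mod_cast hq k
  set M : ℝ := max (Real.log (2 * (r + 1))) 7 with hMdef
  have hM7 : (7:ℝ) ≤ M := le_max_right _ _
  obtain ⟨N, hN⟩ := eventually_atTop.mp (hgrowth.eventually_ge_atTop M)
  have hkey : ∀ k, N ≤ k → Real.exp (M * (q k : ℝ)) ≤ (q (k+1) : ℝ) := by
    intro k hk
    have h1 : M * (q k : ℝ) ≤ Real.log (q (k+1)) := (le_div_iff₀ (hqpos k)).mp (hN k hk)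
    calc Real.exp (M * (q k : ℝ)) ≤ Real.exp (Real.log (q (k+1))) := Real.exp_le_exp.mpr h1
    _ = (q (k+1) : ℝ) := Real.exp_log (hqpos _)
  have hstep : ∀ k, N ≤ k → q k + 1 ≤ q (k + 1) := by
    intro k hk
    have h2 := hkey k hk
    have h3 : M * (q k : ℝ) + 1 ≤ Real.exp (M * (q k : ℝ)) := Real.add_one_le_exp _
    have h4 : (q k : ℝ) ≤ M * (q k : ℝ) := by nlinarith [hqpos k]
    have : (q k : ℝ) + 1 ≤ (q (k+1) : ℝ) := by linarith
    exact_mod_cast this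
  have hmono : ∀ a b, N ≤ a → a ≤ b → q a ≤ q b := by
    intro a b ha hab
    induction b, hab using Nat.le_induction with
    | base => exact le_refl _
    | succ b hab ih => exact ih.trans (Nat.le_of_succ_le (hstep b (ha.trans hab)))
  have hlow : ∀ j, j + 1 ≤ q (N + j) := by
    intro j
    induction j with
    | zero => simpa using Nat.one_le_iff_ne_zero.mpr (hq N).ne'
    | succ j ih =>
      have h := hstep (N + j) (Nat.le_add_right _ _)
      have heq : N + (j + 1) = (N + j) + 1 := by ring
      rw [heq]; omega
  have hsn : ∀ n, N ≤ n → n - N + 1 ≤ q (s n) := by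
    intro n hn
    have h1 : n - N + 1 ≤ q n := by
      have := hlow (n - N)
      rwa [Nat.add_sub_cancel' hn] at this
    exact h1.trans (hmono n (s n) hn hs.le_apply)
  have hbound : ∀ n, N ≤ n →
      ‖(z * Complex.exp (2 * Real.pi * Complex.I * (θ : ℂ)) *
        (u (q (s n)) * (1 - Complex.exp (2 * Real.pi * Complex.I * (q (s n) : ℂ) * (θ : ℂ)))
          * z ^ (q (s n))))‖
      ≤ (r * C * (4 * Real.pi) * 2 ^ N) * (1/2 : ℝ)^n := by
    intro n hn
    set m := q (s n) with hm
    set Q : ℝ := (q (s n + 1) : ℝ) with hQ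
    have hsnN : N ≤ s n := hn.trans hs.le_apply
    have hkey' := hkey (s n) hsnN
    have hexpge : M * (m : ℝ) + 1 ≤ Real.exp (M * (m : ℝ)) := Real.add_one_le_exp _
    have hQ7 : (7:ℝ) ≤ Q := by nlinarith [hq1 (s n)]
    have hQ0 : (0:ℝ) < Q := by linarith
    have hQbig : (2*(r+1))^m ≤ Q := by
      have hpos : (0:ℝ) < 2*(r+1) := by linarith
      calc (2*(r+1))^m = Real.exp ((m:ℝ) * Real.log (2*(r+1))) := by
            rw [Real.exp_nat_mul, Real.exp_log hpos]
        _ ≤ Real.exp (M * (m:ℝ)) := by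
            apply Real.exp_le_exp.mpr
            rw [mul_comm]
            exact mul_le_mul_of_nonneg_right (le_max_left _ _) (Nat.cast_nonneg _)
        _ ≤ Q := hkey'
    set ε : ℝ := (m : ℝ) * θ - (p (s n) : ℝ) with hε
    have hεle : |ε| ≤ 1 / Q := by
      have h1 := happrox (s n)
      have hm0 : (0:ℝ) < (m:ℝ) := hqpos (s n)
      have h2 : ε = (m:ℝ) * (θ - (p (s n) : ℝ)/(m:ℝ)) := by
        field_simp [hε]
        ring
      rw [h2, abs_mul, _root_.abs_of_pos hm0]
      calc (m:ℝ) * |θ - (p (s n) : ℝ)/(m:ℝ)| ≤ (m:ℝ) * (1/((m:ℝ)*Q)) :=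
            mul_le_mul_of_nonneg_left h1 hm0.le
        _ = 1/Q := by field_simp
    have hexp_eq : Complex.exp (2 * Real.pi * Complex.I * (m : ℂ) * (θ:ℂ))
        = Complex.exp ((2*Real.pi*ε : ℝ) * Complex.I) := by
      have harg : (2 * (Real.pi:ℂ) * Complex.I * (m : ℂ) * (θ:ℂ))
          = ((2*Real.pi*ε : ℝ) : ℂ) * Complex.I + (p (s n) : ℂ) * (2*(Real.pi:ℂ)*Complex.I) := by
        push_cast [hε]; ring
      rw [harg, Complex.exp_add, Complex.exp_int_mul_two_pi_mul_I, mul_one]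
    have hxabs : ‖(((2*Real.pi*ε : ℝ) : ℂ) * Complex.I)‖ = 2*Real.pi*|ε| := by
      rw [norm_mul, Complex.norm_I, mul_one, Complex.norm_real, Real.norm_eq_abs, abs_mul, abs_mul,
        _root_.abs_two, _root_.abs_of_pos Real.pi_pos]
    have hpi : Real.pi < 3.15 := Real.pi_lt_d2
    have hx1 : ‖(((2*Real.pi*ε : ℝ) : ℂ) * Complex.I)‖ ≤ 1 := by
      rw [hxabs]
      have h1 : 2*Real.pi*|ε| ≤ 2*Real.pi*(1/Q) := by
        apply mul_le_mul_of_nonneg_left hεle (by positivity)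
      have h2 : 2*Real.pi*(1/Q) ≤ 1 := by
        rw [mul_one_div, div_le_one hQ0]
        linarith
      linarith
    have habs_small : ‖(1 - Complex.exp (2 * Real.pi * Complex.I * (m : ℂ) * (θ:ℂ)))‖
        ≤ 4 * Real.pi / Q := by
      rw [hexp_eq]
      have h0 : ‖(1 - Complex.exp (((2*Real.pi*ε : ℝ) : ℂ) * Complex.I))‖
          = ‖(Complex.exp (((2*Real.pi*ε : ℝ) : ℂ) * Complex.I) - 1)‖ := by
        rw [← norm_neg, neg_sub]
      rw [h0]
      calc ‖(Complex.exp (((2*Real.pi*ε : ℝ) : ℂ) * Complex.I) - 1)‖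
          ≤ 2 * ‖(((2*Real.pi*ε : ℝ) : ℂ) * Complex.I)‖ :=
            Complex.norm_exp_sub_one_le hx1
        _ = 2 * (2*Real.pi*|ε|) := by rw [hxabs]
        _ ≤ 4 * Real.pi / Q := by
            rw [div_eq_mul_inv, ← one_div]
            nlinarith [Real.pi_pos, abs_nonneg ε]
    have habs_exp1 : ‖(Complex.exp (2 * Real.pi * Complex.I * (θ:ℂ)))‖ = 1 := by
      have : (2 * (Real.pi:ℂ) * Complex.I * (θ:ℂ)) = ((2*Real.pi*θ : ℝ) : ℂ) * Complex.I := by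
        push_cast; ring
      rw [this, Complex.norm_exp_ofReal_mul_I]
    have h2N : (2:ℝ)^N * (1/2)^n = (1/2 : ℝ)^(n-N) := by
      have hnN : N + (n - N) = n := Nat.add_sub_cancel' hn
      calc (2:ℝ)^N * (1/2)^n = 2^N * ((1/2:ℝ)^N * (1/2)^(n-N)) := by rw [← pow_add, hnN]
        _ = (2 * (1/2:ℝ))^N * (1/2)^(n-N) := by rw [mul_pow]; ring
        _ = (1/2:ℝ)^(n-N) := by norm_num
    have hrm : r^m / Q ≤ 2^N * (1/2:ℝ)^n := by
      have e1 : r^m / Q ≤ r^m / (2*(r+1))^m :=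
        div_le_div_of_nonneg_left (pow_nonneg hr0 m) (by positivity) hQbig
      have e2 : r^m / (2*(r+1))^m = (r / (2*(r+1)))^m := by rw [div_pow]
      have e3 : (r / (2*(r+1)))^m ≤ (1/2 : ℝ)^m := by
        apply pow_le_pow_left₀ (by positivity)
        rw [div_le_div_iff₀ (by positivity) (by norm_num)]
        linarith
      have e4 : (1/2 : ℝ)^m ≤ (1/2 : ℝ)^(n - N + 1) :=
        pow_le_pow_of_le_one (by norm_num) (by norm_num) (hsn n hn)
      have e5 : (1/2 : ℝ)^(n - N + 1) ≤ (1/2 : ℝ)^(n - N) :=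
        pow_le_pow_of_le_one (by norm_num) (by norm_num) (Nat.le_succ _)
      rw [h2N]
      calc r^m / Q ≤ (r / (2*(r+1)))^m := by rw [← e2]; exact e1
        _ ≤ (1/2:ℝ)^(n-N) := e3.trans (e4.trans e5)
    calc ‖(z * Complex.exp (2 * Real.pi * Complex.I * (θ : ℂ)) *
        (u m * (1 - Complex.exp (2 * Real.pi * Complex.I * (m : ℂ) * (θ : ℂ))) * z ^ m))‖
        = r * 1 * (‖(u m)‖ *
            ‖(1 - Complex.exp (2 * Real.pi * Complex.I * (m : ℂ) * (θ:ℂ)))‖ * r ^ m) := by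
          rw [norm_mul, norm_mul, norm_mul, norm_mul, norm_pow, habs_exp1]
      _ ≤ r * 1 * (C * (4 * Real.pi / Q) * r^m) := by
          apply mul_le_mul_of_nonneg_left _ (by positivity)
          apply mul_le_mul_of_nonneg_right _ (pow_nonneg hr0 m)
          exact mul_le_mul (hC m) habs_small (norm_nonneg _) hC0
      _ = (r * C * (4 * Real.pi)) * (r^m / Q) := by ring
      _ ≤ (r * C * (4 * Real.pi)) * (2^N * (1/2:ℝ)^n) := by
          apply mul_le_mul_of_nonneg_left hrm (by positivity)
      _ = (r * C * (4 * Real.pi) * 2 ^ N) * (1/2 : ℝ)^n := by ring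
  apply summable_of_isBigO_nat
    (summable_geometric_of_lt_one (by norm_num : (0:ℝ) ≤ 1/2) (by norm_num))
  rw [Asymptotics.isBigO_iff]
  refine ⟨r * C * (4 * Real.pi) * 2 ^ N, ?_⟩
  filter_upwards [eventually_ge_atTop N] with n hn
  have h := hbound n hn
  have hx : ‖(1/2 : ℝ)^n‖ = (1/2 : ℝ)^n := by
    rw [Real.norm_eq_abs, _root_.abs_of_nonneg (by positivity : (0:ℝ) ≤ (1/2:ℝ)^n)]
  rw [hx]
  exact h
end

section
/- Let (c_n) be a sequence of complex numbers and (m_n) a strictly increasing sequence of positive integers with m_n ≥ 2^{(n-1)/2}. If Σ_{n≥0} c_n diverges (its partial sums are unbounded), then the radius of convergence of the power series z Σ_{n≥0} c_n z^{m_n} is at most 1; combined with boundedness of (c_n), the radius equals exactly 1. -/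
open Real Complex

/-- Let `(c n)` be a bounded sequence of complex numbers and `(m n)` a strictly
increasing sequence of positive integers with `m n ≥ 2^((n-1)/2)`.  If the partial
sums of `Σ c n` are unbounded, then the power series `z Σ c n z^(m n)` converges
for every `z` with `|z| < 1` and diverges for every `z` with `|z| > 1`, i.e. its
radius of convergence equals exactly `1`. -/
theorem radius_eq_one_of_divergent_coeffs
    (c : ℕ → ℂ) (m : ℕ → ℕ)
    (hc : ∃ C, ∀ n, ‖c n‖ ≤ C)
    (hm : StrictMono m) (hmpos : ∀ n, 0 < m n)
    (hmgrow : ∀ n : ℕ, (2 : ℝ) ^ (((n : ℝ) - 1) / 2) ≤ (m n : ℝ))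
    (hdiv : ¬ BddAbove (Set.range fun N => ‖∑ n ∈ Finset.range N, c n‖)) :
    (∀ z : ℂ, ‖z‖ < 1 → Summable (fun n => z * (c n * z ^ (m n)))) ∧
    (∀ z : ℂ, 1 < ‖z‖ → ¬ Summable (fun n => z * (c n * z ^ (m n)))) := by
  obtain ⟨C, hC⟩ := hc
  have hC0 : 0 ≤ C := le_trans (norm_nonneg (c 0)) (hC 0)
  constructor
  · intro z hz
    have hz0 : 0 ≤ ‖z‖ := norm_nonneg z
    apply Summable.of_norm
    have hgeo : Summable (fun n : ℕ => C * (‖z‖) ^ n) :=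
      (summable_geometric_of_lt_one hz0 hz).mul_left C
    apply Summable.of_nonneg_of_le (fun n => norm_nonneg _) _ hgeo
    intro n
    have hmn : n ≤ m n := hm.le_apply
    have h1 : (‖z‖) ^ (m n) ≤ (‖z‖) ^ n :=
      pow_le_pow_of_le_one hz0 hz.le hmn
    calc ‖z * (c n * z ^ (m n))‖
        = ‖z‖ * (‖c n‖ * (‖z‖) ^ (m n)) := by
          rw [norm_mul, norm_mul, norm_pow]
      _ ≤ 1 * (C * (‖z‖) ^ n) := by
          apply mul_le_mul hz.le _ (by positivity) zero_le_one
          exact mul_le_mul (hC n) h1 (by positivity) hC0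
      _ = C * (‖z‖) ^ n := by ring
  · intro z hz hs
    apply hdiv
    have hz0 : 0 < ‖z‖ := lt_trans zero_lt_one hz
    set r : ℝ := (‖z‖)⁻¹ with hr
    have hr0 : 0 ≤ r := inv_nonneg.mpr hz0.le
    have hr1 : r < 1 := inv_lt_one_of_one_lt₀ hz
    -- terms tend to zero
    have ht : Filter.Tendsto (fun n => ‖z * (c n * z ^ (m n))‖) Filter.atTop (nhds 0) := by
      simpa using hs.tendsto_atTop_zero.norm
    have hev : ∀ᶠ n in Filter.atTop, ‖z * (c n * z ^ (m n))‖ ≤ 1 :=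
      ht.eventually (eventually_le_nhds zero_lt_one)
    obtain ⟨N, hN⟩ := hev.exists_forall_of_atTop
    -- for n ≥ N, |c n| ≤ r ^ n
    have hbd : ∀ n, N ≤ n → ‖c n‖ ≤ r ^ n := by
      intro n hn
      have h1 : ‖c n‖ * (‖z‖) ^ (m n + 1) ≤ 1 := by
        have := hN n hn
        calc ‖c n‖ * (‖z‖) ^ (m n + 1)
            = ‖z * (c n * z ^ (m n))‖ := by
              rw [norm_mul, norm_mul, norm_pow]; ring
          _ ≤ 1 := this
      have h2 : ‖c n‖ ≤ ((‖z‖) ^ (m n + 1))⁻¹ := by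
        rw [inv_eq_one_div, le_div_iff₀ (by positivity)]
        exact h1
      calc ‖c n‖ ≤ ((‖z‖) ^ (m n + 1))⁻¹ := h2
        _ = r ^ (m n + 1) := by rw [hr, inv_pow]
        _ ≤ r ^ n := pow_le_pow_of_le_one hr0 hr1.le (le_trans hm.le_apply (Nat.le_succ _))
    -- Σ |c n| is summable
    have hsum : Summable (fun n => ‖c n‖) := by
      rw [← summable_nat_add_iff N]
      apply Summable.of_nonneg_of_le (fun n => norm_nonneg _)
        (fun n => hbd (n + N) (Nat.le_add_left _ _))
      rw [summable_nat_add_iff N]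
      exact summable_geometric_of_lt_one hr0 hr1
    refine ⟨∑' n, ‖c n‖, ?_⟩
    rintro x ⟨M, rfl⟩
    calc ‖∑ n ∈ Finset.range M, c n‖
        ≤ ∑ n ∈ Finset.range M, ‖c n‖ := norm_sum_le _ _
      _ ≤ ∑' n, ‖c n‖ :=
          Summable.sum_le_tsum _ (fun n _ => norm_nonneg _) hsum
end

section
/- For each k ≥ 1, the set E^k of bounded complex sequences u such that there exists N with |Σ_{n=0}^N u_{m_n}| > k is open and dense in l^∞; consequently the set of u ∈ l^∞ for which Σ_{n≥0} u_{m_n} has unbounded partial sums is a dense G_δ subset of l^∞. -/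
open Real Complex BoundedContinuousFunction

lemma abs_add_aligned (S : ℂ) (t : ℝ) (ht : 0 ≤ t) :
    ‖S + t * (if S = 0 then 1 else S / (‖S‖ : ℂ))‖ = ‖S‖ + t := by
  by_cases hS : S = 0
  · simp [hS, _root_.abs_of_nonneg ht]
  · have h1 : (‖S‖ : ℝ) ≠ 0 := by
      simpa using (norm_ne_zero_iff.mpr hS)
    have h2 : ((‖S‖ : ℝ) : ℂ) ≠ 0 := by exact_mod_cast h1
    rw [if_neg hS]
    have : S + (t : ℂ) * (S / (‖S‖ : ℂ)) =
        S * (((‖S‖ + t : ℝ) : ℂ) / ((‖S‖ : ℝ) : ℂ)) := by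
      push_cast
      field_simp
    rw [this, norm_mul, norm_div, Complex.norm_real, Complex.norm_real,
      Real.norm_of_nonneg (by positivity : (0:ℝ) ≤ ‖S‖ + t),
      Real.norm_of_nonneg (norm_nonneg S)]
    field_simp

set_option synthInstance.maxHeartbeats 1000000 in
instance : BaireSpace (ℕ →ᵇ ℂ) := inferInstance

/-- Let `(m n)` be a fixed strictly increasing sequence of positive integers and
let `l^∞` be the Banach space of bounded complex sequences (realized as
`ℕ →ᵇ ℂ`).  For each `k ≥ 1`, the set `E^k` of `u ∈ l^∞` such that some partial
sum `|Σ_{n=0}^N u (m n)|` exceeds `k` is open and dense; consequently the set of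
`u ∈ l^∞` whose partial sums `Σ u (m n)` are unbounded is a dense `G_δ` subset
of `l^∞`. -/
theorem Ek_open_dense_and_unbounded_partial_sums_dense_Gdelta
    (m : ℕ → ℕ) (hm : StrictMono m) (hmpos : ∀ n, 0 < m n) :
    (∀ k : ℕ, 1 ≤ k →
      IsOpen {u : ℕ →ᵇ ℂ | ∃ N : ℕ,
          (k : ℝ) < ‖∑ n ∈ Finset.range (N + 1), u (m n)‖} ∧
      Dense {u : ℕ →ᵇ ℂ | ∃ N : ℕ,
          (k : ℝ) < ‖∑ n ∈ Finset.range (N + 1), u (m n)‖}) ∧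
    IsGδ {u : ℕ →ᵇ ℂ |
        ¬ BddAbove (Set.range fun N => ‖∑ n ∈ Finset.range N, u (m n)‖)} ∧
    Dense {u : ℕ →ᵇ ℂ |
        ¬ BddAbove (Set.range fun N => ‖∑ n ∈ Finset.range N, u (m n)‖)} := by
  -- openness for any real bound C
  have hopen : ∀ C : ℝ, IsOpen {u : ℕ →ᵇ ℂ | ∃ N : ℕ,
      C < ‖∑ n ∈ Finset.range (N + 1), u (m n)‖} := by
    intro C
    have heq : {u : ℕ →ᵇ ℂ | ∃ N : ℕ,
        C < ‖∑ n ∈ Finset.range (N + 1), u (m n)‖}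
        = ⋃ N : ℕ, (fun u : ℕ →ᵇ ℂ =>
            ‖∑ n ∈ Finset.range (N + 1), u (m n)‖) ⁻¹' Set.Ioi C := by
      ext u; simp [Set.mem_iUnion]
    rw [heq]
    refine isOpen_iUnion fun N => (IsOpen.preimage ?_ isOpen_Ioi)
    exact continuous_norm.comp (continuous_finset_sum _ fun n _ =>
      (continuous_apply _).comp BoundedContinuousFunction.continuous_coe)
  -- density for any real bound C
  have hdense : ∀ C : ℝ, Dense {u : ℕ →ᵇ ℂ | ∃ N : ℕ,
      C < ‖∑ n ∈ Finset.range (N + 1), u (m n)‖} := by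
    intro C
    rw [Metric.dense_iff]
    intro u ε hε
    have hε2 : (0:ℝ) ≤ ε / 2 := (half_pos hε).le
    obtain ⟨N, hN⟩ := exists_nat_gt (2 * C / ε)
    have htk : C < (N + 1 : ℝ) * (ε / 2) := by
      have h1 : 2 * C / ε < (N : ℝ) + 1 := lt_of_lt_of_le hN (by linarith)
      rw [div_lt_iff₀ hε] at h1
      nlinarith
    set S := ∑ n ∈ Finset.range (N + 1), u (m n) with hSdef
    set c : ℂ := if S = 0 then 1 else S / (‖S‖ : ℂ) with hcdef
    have hc : ‖c‖ = 1 := by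
      by_cases hS : S = 0
      · simp [hcdef, hS]
      · simp only [hcdef, if_neg hS, norm_div, Complex.norm_real,
            norm_norm]
        exact div_self (norm_ne_zero_iff.mpr hS)
    set idx := (Finset.range (N + 1)).image m with hidx
    have hbd : ∀ x : ℕ, ‖(if x ∈ idx then ((ε/2 : ℝ) : ℂ) * c else 0)‖ ≤ ε / 2 := by
      intro x
      by_cases h : x ∈ idx
      · simp only [if_pos h, norm_mul, hc, Complex.norm_real,
            mul_one]
        rw [Real.norm_of_nonneg hε2]
      · simp [h, hε2]
    set w : ℕ →ᵇ ℂ := BoundedContinuousFunction.ofNormedAddCommGroup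
      (fun x => if x ∈ idx then ((ε/2 : ℝ) : ℂ) * c else 0)
      continuous_of_discreteTopology (ε/2) hbd with hwdef
    refine ⟨u + w, ?_, ?_⟩
    · rw [Metric.mem_ball, dist_eq_norm, add_sub_cancel_left]
      calc ‖w‖ ≤ ε / 2 :=
            BoundedContinuousFunction.norm_ofNormedAddCommGroup_le _ hε2 hbd
        _ < ε := by linarith
    · refine ⟨N, ?_⟩
      have hw : ∀ n ∈ Finset.range (N + 1), w (m n) = ((ε/2 : ℝ) : ℂ) * c := by
        intro n hn
        have hmem : m n ∈ idx := Finset.mem_image_of_mem m hn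
        simp [hwdef, BoundedContinuousFunction.coe_ofNormedAddCommGroup, hmem]
      have hsum : ∑ n ∈ Finset.range (N + 1), (u + w) (m n)
          = S + ((((N : ℝ) + 1) * (ε / 2) : ℝ) : ℂ) * c := by
        simp only [BoundedContinuousFunction.add_apply]
        rw [Finset.sum_add_distrib, Finset.sum_congr rfl hw, Finset.sum_const,
          Finset.card_range, nsmul_eq_mul, ← hSdef]
        push_cast
        ring
      rw [hsum, abs_add_aligned S _ (by positivity)]
      have := norm_nonneg S
      linarith
  refine ⟨fun k hk => ⟨hopen k, hdense k⟩, ?_, ?_⟩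
  all_goals {
    have heq : {u : ℕ →ᵇ ℂ |
        ¬ BddAbove (Set.range fun N => ‖∑ n ∈ Finset.range N, u (m n)‖)}
        = ⋂ k : ℕ, {u : ℕ →ᵇ ℂ | ∃ N : ℕ,
            ((k : ℝ) + 1) < ‖∑ n ∈ Finset.range (N + 1), u (m n)‖} := by
      ext u
      simp only [Set.mem_setOf_eq, Set.mem_iInter]
      constructor
      · intro h k
        rw [not_bddAbove_iff] at h
        obtain ⟨y, ⟨N, rfl⟩, hy⟩ := h ((k : ℝ) + 1)
        match N with
        | 0 =>
          simp only [Finset.range_zero, Finset.sum_empty, norm_zero] at hy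
          have : (0:ℝ) ≤ (k : ℝ) := Nat.cast_nonneg k
          linarith
        | N + 1 => exact ⟨N, hy⟩
      · intro h
        rw [not_bddAbove_iff]
        intro x
        obtain ⟨k, hk⟩ := exists_nat_ge x
        obtain ⟨N, hN⟩ := h k
        exact ⟨_, ⟨N + 1, rfl⟩, by linarith⟩
    rw [heq]
    first
    | exact IsGδ.iInter fun k => (hopen _).isGδ
    | exact dense_iInter_of_isOpen (fun k => hopen _) (fun k => hdense _)
  }
end

section
/- Given any strictly increasing sequence of positive integers (q''_n) with q''_{n+1} ≥ 4 q''_n, there exists a real number μ such that |1 - e^{2πi q''_n μ}| ≥ √2 for all n ≥ 0. -/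
open Real Complex

/-- Nested interval left endpoints. -/
noncomputable def muSeq (q : ℕ → ℕ) : ℕ → ℝ
  | 0 => 1 / (4 * q 0)
  | n + 1 => ((⌈(q (n + 1) : ℝ) * muSeq q n - 1 / 4⌉ : ℤ) + 1 / 4) / q (n + 1)

lemma muSeq_quarter (q : ℕ → ℕ) (hpos : ∀ n, 0 < q n) (n : ℕ) :
    ∃ m : ℤ, (q n : ℝ) * muSeq q n = m + 1 / 4 := by
  cases n with
  | zero =>
    refine ⟨0, ?_⟩
    have h0 : (q 0 : ℝ) ≠ 0 := Nat.cast_ne_zero.mpr (hpos 0).ne'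
    simp only [muSeq]
    field_simp
    ring
  | succ n =>
    refine ⟨⌈(q (n + 1) : ℝ) * muSeq q n - 1 / 4⌉, ?_⟩
    have h0 : (q (n + 1) : ℝ) ≠ 0 := Nat.cast_ne_zero.mpr (hpos (n + 1)).ne'
    simp only [muSeq]
    field_simp

lemma muSeq_step (q : ℕ → ℕ) (hpos : ∀ n, 0 < q n)
    (hgrow : ∀ n, 4 * q n ≤ q (n + 1)) (n : ℕ) :
    muSeq q n ≤ muSeq q (n + 1) ∧
      muSeq q (n + 1) + 1 / (2 * q (n + 1)) ≤ muSeq q n + 1 / (2 * q n) := by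
  have hQ : (0 : ℝ) < q (n + 1) := by exact_mod_cast hpos (n + 1)
  have hq : (0 : ℝ) < q n := by exact_mod_cast hpos n
  set c : ℝ := (q (n + 1) : ℝ) * muSeq q n with hc
  have hceil₁ : c - 1 / 4 ≤ (⌈c - 1 / 4⌉ : ℝ) := Int.le_ceil _
  have hceil₂ : (⌈c - 1 / 4⌉ : ℝ) < c - 1 / 4 + 1 := Int.ceil_lt_add_one _
  have hgr : (4 : ℝ) * q n ≤ q (n + 1) := by exact_mod_cast hgrow n
  constructor
  · show muSeq q n ≤ ((⌈c - 1 / 4⌉ : ℤ) + 1 / 4) / q (n + 1)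
    rw [le_div_iff₀ hQ]
    nlinarith
  · show ((⌈c - 1 / 4⌉ : ℤ) + 1 / 4) / q (n + 1) + 1 / (2 * q (n + 1)) ≤
      muSeq q n + 1 / (2 * q n)
    rw [div_add_div _ _ hQ.ne' (by positivity), div_le_iff₀ (by positivity)]
    have h1 : (3 : ℝ) / 2 ≤ 1 / (2 * q n) * (q (n + 1)) := by
      have he : (1 : ℝ) / (2 * q n) * (q (n + 1)) = q (n + 1) / (2 * q n) := by ring
      rw [he, le_div_iff₀ (by positivity)]
      nlinarith
    nlinarith

/-- Given any strictly increasing sequence of positive integers `(q'' n)` with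
`q'' (n+1) ≥ 4 * q'' n`, there exists a real number `μ` such that
`|1 - e^{2πi q''_n μ}| ≥ √2` for all `n`. -/
theorem exists_mu_far_from_one
    (q'' : ℕ → ℕ) (hpos : ∀ n, 0 < q'' n) (hmono : StrictMono q'')
    (hgrow : ∀ n, 4 * q'' n ≤ q'' (n + 1)) :
    ∃ μ : ℝ, ∀ n : ℕ,
      Real.sqrt 2 ≤ ‖1 - Complex.exp (2 * Real.pi * Complex.I * (q'' n : ℂ) * (μ : ℂ))‖ := by
  set a : ℕ → ℝ := muSeq q'' with ha
  have hstep := muSeq_step q'' hpos hgrow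
  have hamono : Monotone a := monotone_nat_of_le_succ fun n => (hstep n).1
  have hbanti : ∀ n, a (n + 1) + 1 / (2 * q'' (n + 1)) ≤ a n + 1 / (2 * q'' n) :=
    fun n => (hstep n).2
  have hbanti' : Antitone fun n => a n + 1 / (2 * q'' n) :=
    antitone_nat_of_succ_le hbanti
  have hq : ∀ n, (0 : ℝ) < q'' n := fun n => by exact_mod_cast hpos n
  -- any a m is ≤ a n + 1/(2 q n)
  have hbound : ∀ m n, a m ≤ a n + 1 / (2 * q'' n) := by
    intro m n
    rcases le_total m n with h | h
    · have := hamono h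
      have : a m ≤ a n := this
      have hpos' : (0 : ℝ) < 1 / (2 * q'' n) := by have := hq n; positivity
      linarith
    · calc a m ≤ a m + 1 / (2 * q'' m) := le_add_of_nonneg_right (by positivity)
        _ ≤ a n + 1 / (2 * q'' n) := hbanti' h
  have hbdd : BddAbove (Set.range a) := ⟨a 0 + 1 / (2 * q'' 0), by
    rintro x ⟨m, rfl⟩; exact hbound m 0⟩
  refine ⟨⨆ m, a m, fun n => ?_⟩
  set μ : ℝ := ⨆ m, a m with hμ
  have hle : a n ≤ μ := le_ciSup hbdd n
  have hge : μ ≤ a n + 1 / (2 * q'' n) := ciSup_le fun m => hbound m n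
  obtain ⟨m, hm⟩ := muSeq_quarter q'' hpos n
  -- q'' n * μ ∈ [m + 1/4, m + 3/4]
  have h1 : (m : ℝ) + 1 / 4 ≤ q'' n * μ := by
    rw [← hm]; exact mul_le_mul_of_nonneg_left hle (hq n).le
  have h2 : (q'' n : ℝ) * μ ≤ m + 3 / 4 := by
    have := mul_le_mul_of_nonneg_left hge (hq n).le
    have hqn := hq n
    calc (q'' n : ℝ) * μ ≤ q'' n * (a n + 1 / (2 * q'' n)) := this
      _ = (q'' n * a n) + 1 / 2 := by field_simp
      _ = m + 3 / 4 := by rw [hm]; ring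
  set x : ℝ := 2 * Real.pi * (q'' n) * μ with hx
  have hcos : Real.cos x ≤ 0 := by
    have hx' : x = 2 * π * ((q'' n * μ - m)) + m * (2 * π) := by ring
    rw [hx', Real.cos_add_int_mul_two_pi]
    apply Real.cos_nonpos_of_pi_div_two_le_of_le
    · nlinarith [Real.pi_pos]
    · nlinarith [Real.pi_pos]
  have hexp : (2 : ℂ) * Real.pi * Complex.I * (q'' n : ℂ) * (μ : ℂ) = (x : ℂ) * Complex.I := by
    rw [hx]; push_cast; ring
  rw [hexp, Complex.exp_mul_I]
  have hre : (1 - (Complex.cos x + Complex.sin x * Complex.I)) =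
      Complex.ofReal (1 - Real.cos x) + Complex.ofReal (-Real.sin x) * Complex.I := by
    push_cast; ring
  rw [hre]
  rw [Complex.norm_def, Complex.normSq_apply]
  simp only [Complex.add_re, Complex.ofReal_re, Complex.mul_re, Complex.I_re, Complex.I_im,
    Complex.ofReal_im, Complex.add_im, Complex.mul_im]
  have hs := Real.sin_sq_add_cos_sq x
  apply Real.sqrt_le_sqrt
  nlinarith
end

section
/- Let θ be irrational with q_n^{-1} log q_{n+1} → ∞, let (q'_n) be a subsequence of the convergent denominators, and u ∈ l^∞. If for some (w_0,z_0) ∈ ℂ² the full orbit of (w_0,z_0) under A(w,z) = (e^{2πiθ}w + φ_{θ}(z), e^{2πiθ}z) is bounded by M, then the family of entire maps φ_{Nθ,u}(z) = z e^{2πiNθ} Σ_n u_{q'_n}(1−e^{2πi q'_n Nθ}) z^{q'_n}, N ≥ 0, is uniformly bounded by 2M on the circle |z| = |z_0|, and hence on the disc Δ(0,|z_0|). -/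
/-!
Write `λ = e^{2πiθ}`. The maps `φ_N` satisfy the cocycle identity
`φ_{N+1}(z) = λ φ_N(z) + φ_1(λ^N z)`, hence `A^N(w, z) = (λ^N w + φ_N(z), λ^N z)`, and comparing
the first coordinates of `A^{N+k}(w₀, z₀)` and `A^k(w₀, z₀)` gives `|φ_N(λ^k z₀)| ≤ 2M`.
Since `θ` is irrational the points `λ^k z₀` are dense in the circle `|z| = |z₀|`. Each `φ_N` is
entire: `|1 - λ^{q_m N}| ≤ 2πN |q_m θ - p_m| ≤ 2πN / q_{m+1}`, and the growth condition makes
`1 / q_{m+1}` smaller than any `R^{-q_m}`. Continuity then extends the bound to the circle, and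
the maximum principle to the disc.
-/

open Real Complex Filter

lemma iterate_skewProduct {R : Type*} [CommSemiring R] {c : R} {f : ℕ → R → R}
    (hf₀ : ∀ z, f 0 z = 0) (hf : ∀ N z, f (N + 1) z = c * f N z + f 1 (c ^ N * z))
    {A : R × R → R × R} (hA : ∀ w z, A (w, z) = (c * w + f 1 z, c * z)) (N : ℕ) (w z : R) :
    A^[N] (w, z) = (c ^ N * w + f N z, c ^ N * z) := by
  induction N with
  | zero => simp [hf₀]
  | succ N ih =>
    rw [Function.iterate_succ_apply', ih, hA, hf N z]
    ext <;> ring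

lemma norm_le_of_bounded_orbit_skewProduct {𝕜 : Type*} [NormedField 𝕜] {c : 𝕜} (hc : ‖c‖ = 1)
    {f : ℕ → 𝕜 → 𝕜} (hf₀ : ∀ z, f 0 z = 0)
    (hf : ∀ N z, f (N + 1) z = c * f N z + f 1 (c ^ N * z))
    {A : 𝕜 × 𝕜 → 𝕜 × 𝕜} (hA : ∀ w z, A (w, z) = (c * w + f 1 z, c * z))
    {w₀ z₀ : 𝕜} {M : ℝ} (horbit : ∀ N, ‖A^[N] (w₀, z₀)‖ ≤ M) (N k : ℕ) :
    ‖f N (c ^ k * z₀)‖ ≤ 2 * M := by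
  have hiter := iterate_skewProduct hf₀ hf hA
  have hfst (n : ℕ) : ‖c ^ n * w₀ + f n z₀‖ ≤ M := by
    simpa [hiter] using (norm_fst_le _).trans (horbit n)
  have hshift : c ^ (N + k) * w₀ + f (N + k) z₀ =
      c ^ N * (c ^ k * w₀ + f k z₀) + f N (c ^ k * z₀) := by
    simpa [hiter] using congrArg Prod.fst (Function.iterate_add_apply A N k (w₀, z₀))
  calc ‖f N (c ^ k * z₀)‖
      = ‖(c ^ (N + k) * w₀ + f (N + k) z₀) - c ^ N * (c ^ k * w₀ + f k z₀)‖ := by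
        rw [hshift, add_sub_cancel_left]
    _ ≤ M + M := norm_sub_le_of_le (hfst _) (by simpa [hc] using hfst k)
    _ = 2 * M := by ring

lemma summable_mul_pow_of_summable_norm_mul_pow {b : ℕ → ℂ} {k : ℕ → ℕ}
    (h : ∀ R, 0 ≤ R → Summable fun n => ‖b n‖ * R ^ k n) (z : ℂ) :
    Summable fun n => b n * z ^ k n :=
  .of_norm <| by simpa only [norm_mul, norm_pow] using h ‖z‖ (norm_nonneg z)

lemma differentiable_tsum_mul_pow {b : ℕ → ℂ} {k : ℕ → ℕ}
    (h : ∀ R, 0 ≤ R → Summable fun n => ‖b n‖ * R ^ k n) :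
    Differentiable ℂ fun z => ∑' n, b n * z ^ k n := by
  intro z
  have hball : DifferentiableOn ℂ (fun z => ∑' n, b n * z ^ k n) (Metric.ball 0 (‖z‖ + 1)) := by
    refine differentiableOn_tsum_of_summable_norm (h (‖z‖ + 1) (by positivity))
      (fun n => (by fun_prop : Differentiable ℂ fun z : ℂ => b n * z ^ k n).differentiableOn)
      Metric.isOpen_ball fun n w hw => ?_
    rw [norm_mul, norm_pow]
    gcongr
    exact (mem_ball_zero_iff.1 hw).le
  exact hball.differentiableAt (Metric.isOpen_ball.mem_nhds (by simp))

-- With `c = e^{2πiθ}`, `a = u ∘ q'` and `k = q'` this is the paper's `φ_{Nθ,u}`.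
noncomputable def skewCocycle (c : ℂ) (a : ℕ → ℂ) (k : ℕ → ℕ) (N : ℕ) (z : ℂ) : ℂ :=
  z * c ^ N * ∑' n, a n * (1 - c ^ (k n * N)) * z ^ k n

section skewCocycle

variable {c : ℂ} {a : ℕ → ℂ} {k : ℕ → ℕ}

@[simp]
lemma skewCocycle_zero (z : ℂ) : skewCocycle c a k 0 z = 0 := by
  simp [skewCocycle]

lemma skewCocycle_succ
    (hsum : ∀ N R, 0 ≤ R → Summable fun n => ‖a n * (1 - c ^ (k n * N))‖ * R ^ k n)
    (N : ℕ) (z : ℂ) :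
    skewCocycle c a k (N + 1) z = c * skewCocycle c a k N z + skewCocycle c a k 1 (c ^ N * z) := by
  have hseries : ∑' n, a n * (1 - c ^ (k n * (N + 1))) * z ^ k n =
      ∑' n, a n * (1 - c ^ (k n * N)) * z ^ k n +
        ∑' n, a n * (1 - c ^ (k n * 1)) * (c ^ N * z) ^ k n := by
    rw [← (summable_mul_pow_of_summable_norm_mul_pow (hsum N) z).tsum_add
      (summable_mul_pow_of_summable_norm_mul_pow (hsum 1) _)]
    congr 1 with n
    rw [mul_pow, ← pow_mul]
    ring
  simp only [skewCocycle, hseries]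
  ring

lemma differentiable_skewCocycle
    (hsum : ∀ N R, 0 ≤ R → Summable fun n => ‖a n * (1 - c ^ (k n * N))‖ * R ^ k n)
    (N : ℕ) : Differentiable ℂ (skewCocycle c a k N) :=
  (differentiable_id.mul_const _).mul (differentiable_tsum_mul_pow (hsum N))

end skewCocycle

lemma norm_one_sub_exp_two_pi_I_pow_le (θ : ℝ) (p : ℤ) (q N : ℕ) :
    ‖1 - exp (2 * π * I * θ) ^ (q * N)‖ ≤ 2 * π * N * |q * θ - p| := by
  have hexp : exp (2 * π * I * θ) ^ (q * N) = exp (I * ↑(2 * π * N * (q * θ - p))) := by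
    rw [← Complex.exp_nat_mul, show ((q * N : ℕ) : ℂ) * (2 * π * I * θ) =
      I * ↑(2 * π * N * (q * θ - p)) + (N * p : ℤ) * (2 * π * I) by push_cast; ring,
      Complex.exp_add, exp_int_mul_two_pi_mul_I, mul_one]
  rw [hexp, norm_sub_rev]
  refine norm_exp_I_mul_ofReal_sub_one_le.trans_eq ?_
  rw [Real.norm_eq_abs, abs_mul, abs_of_nonneg (by positivity)]

lemma norm_one_sub_exp_two_pi_I_pow_le_div {θ : ℝ} {p : ℤ} {q q' : ℕ} (hq : 0 < q)
    (happrox : |θ - p / q| ≤ 1 / (q * q')) (N : ℕ) :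
    ‖1 - exp (2 * π * I * θ) ^ (q * N)‖ ≤ 2 * π * N / q' := by
  have hq' : (0 : ℝ) < q := by exact_mod_cast hq
  have hdist : |q * θ - p| ≤ 1 / q' := by
    calc |q * θ - p| = |q * (θ - p / q)| := by congr 1; field_simp
      _ = q * |θ - p / q| := by rw [abs_mul, abs_of_pos hq']
      _ ≤ q * (1 / (q * q')) := by gcongr
      _ = 1 / q' := by rw [mul_one_div, div_mul_cancel_left₀ hq'.ne', one_div]
  calc _ ≤ 2 * π * N * |q * θ - p| := norm_one_sub_exp_two_pi_I_pow_le θ p q N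
    _ ≤ 2 * π * N * (1 / q') := by gcongr
    _ = 2 * π * N / q' := by ring

lemma eventually_exp_mul_le_succ {q : ℕ → ℕ} (hq : ∀ n, 0 < q n)
    (hgrowth : Tendsto (fun n => Real.log (q (n + 1)) / (q n : ℝ)) atTop atTop) (K : ℝ) :
    ∀ᶠ m in atTop, Real.exp (K * q m) ≤ q (m + 1) := by
  filter_upwards [hgrowth.eventually_ge_atTop K] with m hm
  rw [le_div_iff₀ (by exact_mod_cast hq m)] at hm
  exact (Real.exp_le_exp.2 hm).trans_eq (Real.exp_log (by exact_mod_cast hq (m + 1)))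

lemma exists_le_add_of_eventually_lt_succ {q : ℕ → ℕ} (h : ∀ᶠ m in atTop, q m < q (m + 1)) :
    ∃ n₀, ∀ m, m ≤ q m + n₀ := by
  obtain ⟨n₀, hn₀⟩ := h.exists_forall_of_atTop
  refine ⟨n₀, fun m => ?_⟩
  induction m with
  | zero => omega
  | succ m ih =>
    rcases lt_or_ge m n₀ with hm | hm
    · omega
    · have := hn₀ m hm
      omega

lemma pow_div_le_exp_neg_one_pow {R Q : ℝ} (hR : 0 ≤ R) {k : ℕ}
    (hQ : Real.exp ((R + 1) * k) ≤ Q) : R ^ k / Q ≤ Real.exp (-1) ^ k := by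
  have hbase : R * Real.exp (-(R + 1)) ≤ Real.exp (-1) := by
    rw [neg_add, Real.exp_add, ← mul_assoc]
    refine mul_le_of_le_one_left (Real.exp_pos _).le ?_
    rw [Real.exp_neg, ← div_eq_mul_inv, div_le_one (Real.exp_pos _)]
    linarith [Real.add_one_le_exp R]
  calc R ^ k / Q ≤ R ^ k / Real.exp ((R + 1) * k) := by gcongr
    _ = (R * Real.exp (-(R + 1))) ^ k := by
        rw [mul_pow, ← Real.exp_nat_mul, div_eq_mul_inv, ← Real.exp_neg]; ring_nf
    _ ≤ Real.exp (-1) ^ k := by gcongr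

lemma summable_norm_mul_one_sub_exp_pow_mul_pow {θ : ℝ} {p : ℕ → ℤ} {q : ℕ → ℕ}
    (hq : ∀ n, 0 < q n)
    (happrox : ∀ n, |θ - (p n : ℝ) / (q n : ℝ)| ≤ 1 / ((q n : ℝ) * (q (n + 1) : ℝ)))
    (hgrowth : Tendsto (fun n => Real.log (q (n + 1)) / (q n : ℝ)) atTop atTop)
    {s : ℕ → ℕ} (hs : StrictMono s) {a : ℕ → ℂ} {C : ℝ} (ha : ∀ n, ‖a n‖ ≤ C) (N : ℕ) {R : ℝ}
    (hR : 0 ≤ R) :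
    Summable fun n => ‖a n * (1 - exp (2 * π * I * θ) ^ (q (s n) * N))‖ * R ^ q (s n) := by
  set ρ := Real.exp (-1)
  have hρ₀ : 0 < ρ := Real.exp_pos _
  have hρ : ρ < 1 := Real.exp_lt_one_iff.2 (by norm_num)
  obtain ⟨n₀, hlin⟩ := exists_le_add_of_eventually_lt_succ <|
    (eventually_exp_mul_le_succ hq hgrowth 1).mono fun m hm => by
      rw [one_mul] at hm
      exact_mod_cast (lt_add_one _).trans_le ((Real.add_one_le_exp _).trans hm)
  obtain ⟨n₁, hn₁⟩ := (eventually_exp_mul_le_succ hq hgrowth (R + 1)).exists_forall_of_atTop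
  refine Summable.of_norm_bounded_eventually_nat
    ((summable_geometric_of_lt_one hρ₀.le hρ).mul_left (C * (2 * π * N) / ρ ^ n₀)) ?_
  filter_upwards [eventually_ge_atTop n₁] with n hn
  have hC : 0 ≤ C := (norm_nonneg _).trans (ha 0)
  calc ‖‖a n * (1 - exp (2 * π * I * θ) ^ (q (s n) * N))‖ * R ^ q (s n)‖
      = ‖a n‖ * ‖1 - exp (2 * π * I * θ) ^ (q (s n) * N)‖ * R ^ q (s n) := by
        rw [Real.norm_eq_abs, abs_of_nonneg (by positivity), norm_mul]
    _ ≤ C * (2 * π * N / q (s n + 1)) * R ^ q (s n) := by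
        gcongr
        exacts [ha n, norm_one_sub_exp_two_pi_I_pow_le_div (hq _) (happrox _) N]
    _ = C * (2 * π * N) * (R ^ q (s n) / q (s n + 1)) := by ring
    _ ≤ C * (2 * π * N) * ρ ^ q (s n) := by
        gcongr
        exact pow_div_le_exp_neg_one_pow hR (hn₁ _ (hn.trans hs.le_apply))
    _ = C * (2 * π * N) / ρ ^ n₀ * ρ ^ (q (s n) + n₀) := by
        rw [pow_add]
        field_simp
    _ ≤ C * (2 * π * N) / ρ ^ n₀ * ρ ^ n :=
        mul_le_mul_of_nonneg_left (pow_le_pow_of_le_one hρ₀.le hρ.le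
          (hs.le_apply.trans (hlin _))) (by positivity)

lemma denseRange_circleExp_pow {θ : ℝ} (hθ : Irrational θ) :
    DenseRange fun k : ℕ => Circle.exp (2 * π * θ) ^ k := by
  rw [← denseRange_zpow_iff_pow]
  have hsurj : Function.Surjective (AddCircle.toCircle : AddCircle (1 : ℝ) → Circle) := by
    intro w
    obtain ⟨t, rfl⟩ := Circle.exp_surjective w
    exact ⟨(t / (2 * π) : ℝ), by rw [AddCircle.toCircle_apply_mk]; congr 1; field_simp⟩
  have hdense := hsurj.denseRange.comp
    (AddCircle.denseRange_zsmul_coe_iff.2 (by simpa using hθ)) AddCircle.continuous_toCircle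
  convert hdense using 2 with k
  simp [AddCircle.toCircle_zsmul, AddCircle.toCircle_apply_mk]

lemma mem_closure_range_exp_two_pi_I_pow_mul {θ : ℝ} (hθ : Irrational θ) {z₀ z : ℂ}
    (hz : ‖z‖ = ‖z₀‖) : z ∈ closure (Set.range fun k : ℕ => exp (2 * π * I * θ) ^ k * z₀) := by
  have hrot : (Circle.exp (arg z - arg z₀) : ℂ) * z₀ = z := by
    calc (Circle.exp (arg z - arg z₀) : ℂ) * z₀
        = exp (↑(arg z - arg z₀) * I) * (‖z₀‖ * exp (arg z₀ * I)) := by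
          rw [Circle.coe_exp, norm_mul_exp_arg_mul_I]
      _ = ‖z‖ * exp (arg z * I) := by
          rw [hz, mul_left_comm, ← Complex.exp_add]
          push_cast
          ring_nf
      _ = z := norm_mul_exp_arg_mul_I z
  rw [← hrot]
  refine map_mem_closure (f := fun w : Circle => (w : ℂ) * z₀) (by fun_prop)
    (denseRange_circleExp_pow hθ _) ?_
  rintro _ ⟨k, rfl⟩
  refine ⟨k, ?_⟩
  simp only [Circle.coe_pow, Circle.coe_exp]
  push_cast
  ring_nf

lemma norm_le_of_forall_norm_eq_le {F : Type*} [NormedAddCommGroup F] [NormedSpace ℂ F]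
    {f : ℂ → F} (hf : Differentiable ℂ f) {r B : ℝ} (h : ∀ z, ‖z‖ = r → ‖f z‖ ≤ B) {z : ℂ}
    (hz : ‖z‖ ≤ r) : ‖f z‖ ≤ B := by
  rcases hz.eq_or_lt with hz | hz
  · exact h z hz
  have hr : r ≠ 0 := ((norm_nonneg z).trans_lt hz).ne'
  refine Complex.norm_le_of_forall_mem_frontier_norm_le Metric.isBounded_ball hf.diffContOnCl
    (fun w hw => h w ?_) (subset_closure (mem_ball_zero_iff.2 hz))
  simpa [frontier_ball _ hr] using hw

lemma exp_two_pi_I_mul_nat (θ : ℝ) (n : ℕ) :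
    exp (2 * π * I * n * θ) = exp (2 * π * I * θ) ^ n := by
  rw [← Complex.exp_nat_mul]
  ring_nf

/-- Let `θ` be irrational with convergent denominators satisfying
`(log q (n+1))/q n → ∞`, let `q ∘ s` be a subsequence, and `u` a bounded complex
sequence.  Consider the entire maps
`φ_N(z) = z e^{2πiNθ} Σ_n u_{q'_n} (1 - e^{2πi q'_n N θ}) z^{q'_n}` and the
automorphism `A(w,z) = (e^{2πiθ} w + φ_1(z), e^{2πiθ} z)`.  If the orbit of some
`(w₀,z₀)` under `A` is bounded by `M`, then the family `(φ_N)` is uniformly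
bounded by `2M` on the circle `|z| = |z₀|` and hence on the disc `|z| ≤ |z₀|`. -/
theorem phi_bounded_of_bounded_orbit
    (θ : ℝ) (hθ : Irrational θ)
    (p : ℕ → ℤ) (q : ℕ → ℕ) (hq : ∀ n, 0 < q n)
    (happrox : ∀ n, |θ - (p n : ℝ) / (q n : ℝ)| ≤ 1 / ((q n : ℝ) * (q (n + 1) : ℝ)))
    (hgrowth : Tendsto (fun n => Real.log (q (n + 1)) / (q n : ℝ)) atTop atTop)
    (s : ℕ → ℕ) (hs : StrictMono s)
    (u : ℕ → ℂ) (hu : ∃ C, ∀ n, ‖u n‖ ≤ C)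
    (φ : ℕ → ℂ → ℂ)
    (hφ : ∀ N : ℕ, ∀ z : ℂ, φ N z =
      z * Complex.exp (2 * Real.pi * Complex.I * (N : ℂ) * (θ : ℂ)) *
        ∑' n : ℕ, u (q (s n))
          * (1 - Complex.exp (2 * Real.pi * Complex.I * (q (s n) : ℂ) * (N : ℂ) * (θ : ℂ)))
          * z ^ (q (s n)))
    (A : ℂ × ℂ → ℂ × ℂ)
    (hA : ∀ w z : ℂ, A (w, z) =
      (Complex.exp (2 * Real.pi * Complex.I * (θ : ℂ)) * w + φ 1 z,
       Complex.exp (2 * Real.pi * Complex.I * (θ : ℂ)) * z))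
    (w₀ z₀ : ℂ) (M : ℝ)
    (horbit : ∀ N : ℕ, ‖A^[N] (w₀, z₀)‖ ≤ M) :
    (∀ N : ℕ, ∀ z : ℂ, ‖z‖ = ‖z₀‖ → ‖φ N z‖ ≤ 2 * M) ∧
    (∀ N : ℕ, ∀ z : ℂ, ‖z‖ ≤ ‖z₀‖ → ‖φ N z‖ ≤ 2 * M) := by
  obtain ⟨C, hC⟩ := hu
  have hsum (N : ℕ) (R : ℝ) (hR : 0 ≤ R) := summable_norm_mul_one_sub_exp_pow_mul_pow hq
    happrox hgrowth hs (fun n => hC (q (s n))) N hR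
  have hφ_eq :
      φ = skewCocycle (exp (2 * π * I * θ)) (fun n => u (q (s n))) (fun n => q (s n)) := by
    ext N z
    rw [hφ, skewCocycle, exp_two_pi_I_mul_nat]
    congr! 4 with n
    rw [← exp_two_pi_I_mul_nat]
    push_cast
    ring_nf
  have hdiff (N : ℕ) : Differentiable ℂ (φ N) := hφ_eq ▸ differentiable_skewCocycle hsum N
  have hrot : ‖exp (2 * π * I * θ)‖ = 1 := by
    rw [show 2 * π * I * θ = ↑(2 * π * θ) * I by push_cast; ring, norm_exp_ofReal_mul_I]
  have horbit_bound (N k : ℕ) : ‖φ N (exp (2 * π * I * θ) ^ k * z₀)‖ ≤ 2 * M := by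
    subst hφ_eq
    exact norm_le_of_bounded_orbit_skewProduct hrot skewCocycle_zero (skewCocycle_succ hsum) hA
      horbit N k
  have hcircle (N : ℕ) (z : ℂ) (hz : ‖z‖ = ‖z₀‖) : ‖φ N z‖ ≤ 2 * M := by
    refine (isClosed_le (hdiff N).continuous.norm continuous_const).closure_subset_iff.2 ?_
      (mem_closure_range_exp_two_pi_I_pow_mul hθ hz)
    rintro _ ⟨k, rfl⟩
    exact horbit_bound N k
  exact ⟨hcircle, fun N z hz => norm_le_of_forall_norm_eq_le (hdiff N) (hcircle N) hz⟩
end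

section
/- Let θ be irrational whose convergent denominators satisfy q_n^{-1} log q_{n+1} → ∞. For any sequence of positive reals (ε_p) converging to 0, there exist a subsequence (q'_n) of (q_n) and a strictly increasing sequence of integers (N_p)_{p≥1} such that for every p ≥ 1: |1 − e^{2πi N_p θ}| + Σ_{n≥0} |1 − e^{2πi q'_n N_p θ}| p^{q'_n} ≤ ε_p. -/
open Real Complex Filter

lemma aux_abs_le (x : ℝ) : ‖1 - Complex.exp ((x : ℂ) * Complex.I)‖ ≤ |x| := by
  have h1 : Complex.exp ((x : ℂ) * Complex.I) = (Real.cos x : ℂ) + (Real.sin x : ℂ) * Complex.I := by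
    rw [Complex.exp_mul_I]
    simp [Complex.ofReal_cos, Complex.ofReal_sin]
  have h2 : (1 : ℂ) - Complex.exp ((x : ℂ) * Complex.I)
      = ((1 - Real.cos x : ℝ) : ℂ) + ((-Real.sin x : ℝ) : ℂ) * Complex.I := by
    rw [h1]; push_cast; ring
  have h3 : Complex.normSq (1 - Complex.exp ((x : ℂ) * Complex.I))
      = (1 - Real.cos x) ^ 2 + (-Real.sin x) ^ 2 := by
    rw [h2, Complex.normSq_add_mul_I]
  have hcos := Real.one_sub_sq_div_two_le_cos (x := x)
  have hsc := Real.sin_sq_add_cos_sq x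
  have h4 : Complex.normSq (1 - Complex.exp ((x : ℂ) * Complex.I)) ≤ x ^ 2 := by
    rw [h3]; nlinarith
  have h5 : ‖1 - Complex.exp ((x : ℂ) * Complex.I)‖
      = Real.sqrt (Complex.normSq (1 - Complex.exp ((x : ℂ) * Complex.I))) := by
    rw [Complex.norm_def]
  rw [h5, ← Real.sqrt_sq_eq_abs]
  exact Real.sqrt_le_sqrt h4

lemma aux_abs_le_int (x : ℝ) (k : ℤ) :
    ‖1 - Complex.exp (2 * (Real.pi : ℂ) * Complex.I * (x : ℂ))‖
      ≤ 2 * Real.pi * |x - (k : ℝ)| := by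
  have harg : 2 * (Real.pi : ℂ) * Complex.I * (x : ℂ)
      = ((2 * Real.pi * (x - (k : ℝ)) : ℝ) : ℂ) * Complex.I + (k : ℂ) * (2 * (Real.pi : ℂ) * Complex.I) := by
    push_cast; ring
  rw [harg, Complex.exp_add, Complex.exp_int_mul_two_pi_mul_I, mul_one]
  calc ‖1 - Complex.exp (((2 * Real.pi * (x - (k:ℝ)) : ℝ) : ℂ) * Complex.I)‖
      ≤ |2 * Real.pi * (x - (k:ℝ))| := aux_abs_le _
    _ = 2 * Real.pi * |x - (k:ℝ)| := by
        rw [abs_mul, abs_of_pos (by positivity : (0:ℝ) < 2 * Real.pi)]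

lemma aux_growth (q : ℕ → ℕ) (hq : ∀ n, 0 < q n)
    (hgrowth : Tendsto (fun n => Real.log (q (n + 1)) / (q n : ℝ)) atTop atTop)
    (A B : ℝ) (hA : 0 < A) (hB : 1 ≤ B) :
    ∀ᶠ m in atTop, A * B ^ (q m) ≤ (q (m + 1) : ℝ) := by
  set T : ℝ := |Real.log A| + Real.log B + 1 with hT
  filter_upwards [hgrowth.eventually_ge_atTop T] with m hm
  have hq1 : (1 : ℝ) ≤ q m := by exact_mod_cast hq m
  have hqpos : (0 : ℝ) < q m := by linarith
  have hq1' : (0 : ℝ) < q (m + 1) := by exact_mod_cast hq (m + 1)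
  have hlB : 0 ≤ Real.log B := Real.log_nonneg hB
  have h2 : T * q m ≤ Real.log (q (m + 1)) := by
    calc T * q m ≤ Real.log (q (m + 1)) / q m * q m :=
          mul_le_mul_of_nonneg_right hm (le_of_lt hqpos)
      _ = Real.log (q (m + 1)) := div_mul_cancel₀ _ (ne_of_gt hqpos)
  have h1 : Real.log (A * B ^ q m) = Real.log A + q m * Real.log B := by
    rw [Real.log_mul (ne_of_gt hA) (by positivity), Real.log_pow]
  have h3 : Real.log A + (q m : ℝ) * Real.log B ≤ T * q m := by
    have h4 : Real.log A ≤ |Real.log A| := le_abs_self _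
    have h5 : |Real.log A| ≤ |Real.log A| * q m := le_mul_of_one_le_right (abs_nonneg _) hq1
    nlinarith
  have hlog : Real.log (A * B ^ q m) ≤ Real.log (q (m + 1)) := by rw [h1]; linarith
  have hpos : 0 < A * B ^ q m := by positivity
  calc A * B ^ q m = Real.exp (Real.log (A * B ^ q m)) := (Real.exp_log hpos).symm
    _ ≤ Real.exp (Real.log (q (m + 1))) := Real.exp_le_exp.2 hlog
    _ = q (m + 1) := Real.exp_log hq1'

lemma aux_qtop (q : ℕ → ℕ) (hq : ∀ n, 0 < q n)
    (hgrowth : Tendsto (fun n => Real.log (q (n + 1)) / (q n : ℝ)) atTop atTop) :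
    Tendsto (fun n => (q n : ℝ)) atTop atTop := by
  rw [← tendsto_add_atTop_iff_nat 1]
  rw [tendsto_atTop]
  intro b
  have hA : (0 : ℝ) < max b 1 := lt_of_lt_of_le one_pos (le_max_right _ _)
  filter_upwards [aux_growth q hq hgrowth (max b 1) 1 hA le_rfl] with m hm
  calc b ≤ max b 1 := le_max_left _ _
    _ = max b 1 * 1 ^ q m := by rw [one_pow, mul_one]
    _ ≤ q (m + 1) := hm

section
variable (q : ℕ → ℕ) (ε : ℕ → ℝ)

def Good (j k m : ℕ) : Prop :=
  j < m ∧ q j < q m ∧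
  8 * Real.pi * (k + 1) / ε k * (Real.exp 1 * (k + 1)) ^ (q m) ≤ (q (m + 1) : ℝ) ∧
  ∀ p : ℕ, 1 ≤ p → p < k → 4 * Real.pi * (q j) * 2 ^ k / ε p * (p : ℝ) ^ (q m) ≤ (q (m + 1) : ℝ)

lemma exGood (hq : ∀ n, 0 < q n)
    (hgrowth : Tendsto (fun n => Real.log (q (n + 1)) / (q n : ℝ)) atTop atTop)
    (hεpos : ∀ p, 0 < ε p) (j k : ℕ) : ∃ m, Good q ε j k m := by
  have h1 : ∀ᶠ m in atTop, j < m := eventually_gt_atTop j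
  have h2 : ∀ᶠ m in atTop, q j < q m := by
    filter_upwards [(aux_qtop q hq hgrowth).eventually_gt_atTop (q j)] with m hm
    exact_mod_cast hm
  have h3 : ∀ᶠ m in atTop,
      8 * Real.pi * (k + 1) / ε k * (Real.exp 1 * (k + 1)) ^ (q m) ≤ (q (m + 1) : ℝ) := by
    apply aux_growth q hq hgrowth
    · have := hεpos k; positivity
    · calc (1:ℝ) ≤ Real.exp 1 := by
            have := Real.add_one_le_exp (1:ℝ); linarith
        _ = Real.exp 1 * 1 := (mul_one _).symm
        _ ≤ Real.exp 1 * (k + 1) := by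
            apply mul_le_mul_of_nonneg_left _ (Real.exp_pos 1).le
            exact_mod_cast Nat.le_add_left 1 k
  have h4 : ∀ᶠ m in atTop, ∀ p ∈ Finset.range k,
      1 ≤ p → 4 * Real.pi * (q j) * 2 ^ k / ε p * (p : ℝ) ^ (q m) ≤ (q (m + 1) : ℝ) := by
    rw [Filter.eventually_all_finset]
    intro p hp
    by_cases h1p : 1 ≤ p
    · have hA : (0:ℝ) < 4 * Real.pi * (q j) * 2 ^ k / ε p := by
        have := hεpos p
        have := hq j
        positivity
      have hB : (1:ℝ) ≤ (p : ℝ) := by exact_mod_cast h1p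
      filter_upwards [aux_growth q hq hgrowth _ _ hA hB] with m hm
      exact fun _ => hm
    · filter_upwards with m hm; omega
  obtain ⟨m, hm1, hm2, hm3, hm4⟩ := (h1.and (h2.and (h3.and h4))).exists
  exact ⟨m, hm1, hm2, hm3, fun p h1p hpk => hm4 p (Finset.mem_range.2 hpk) h1p⟩

end

/-- Let `θ` be irrational whose convergent denominators satisfy
`(log q (n+1))/q n → ∞`.  For any sequence of positive reals `(ε p)` converging
to `0`, there exist a subsequence `q ∘ s` of `(q n)` and a strictly increasing
sequence of positive integers `(N p)` such that for every `p ≥ 1`,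
`|1 - e^{2πi N_p θ}| + Σ_n |1 - e^{2πi q'_n N_p θ}| p^{q'_n} ≤ ε p`. -/
theorem exists_recurrence_times
    (θ : ℝ) (hθ : Irrational θ)
    (pnum : ℕ → ℤ) (q : ℕ → ℕ) (hq : ∀ n, 0 < q n)
    (happrox : ∀ n, |θ - (pnum n : ℝ) / (q n : ℝ)| ≤ 1 / ((q n : ℝ) * (q (n + 1) : ℝ)))
    (hgrowth : Tendsto (fun n => Real.log (q (n + 1)) / (q n : ℝ)) atTop atTop)
    (ε : ℕ → ℝ) (hεpos : ∀ p, 0 < ε p) (hε : Tendsto ε atTop (nhds 0)) :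
    ∃ s : ℕ → ℕ, StrictMono s ∧
    ∃ N : ℕ → ℕ, StrictMono N ∧ (∀ p, 0 < N p) ∧
      ∀ p : ℕ, 1 ≤ p →
        Summable (fun n : ℕ =>
          ‖1 - Complex.exp
              (2 * Real.pi * Complex.I * (q (s n) : ℂ) * (N p : ℂ) * (θ : ℂ))‖
            * (p : ℝ) ^ (q (s n))) ∧
        ‖1 - Complex.exp (2 * Real.pi * Complex.I * (N p : ℂ) * (θ : ℂ))‖
          + ∑' n : ℕ,
              ‖1 - Complex.exp
                  (2 * Real.pi * Complex.I * (q (s n) : ℂ) * (N p : ℂ) * (θ : ℂ))‖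
                * (p : ℝ) ^ (q (s n))
          ≤ ε p := by
  classical
  have hqR : ∀ i, (0:ℝ) < q i := fun i => by exact_mod_cast hq i
  have hq1 : ∀ i, (1:ℝ) ≤ q i := fun i => by exact_mod_cast hq i
  choose f hf using exGood q ε hq hgrowth hεpos
  set s : ℕ → ℕ := fun n => Nat.rec (f 0 0) (fun n prev => f prev (n+1)) n with hs
  have hss : ∀ n, s (n+1) = f (s n) (n+1) := fun n => rfl
  have hGood : ∀ n, Good q ε (s n) (n+1) (s (n+1)) := fun n => by rw [hss]; exact hf _ _
  clear_value s
  clear hs hss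
  have hsmono : StrictMono s := strictMono_nat_of_lt_succ fun n => (hGood n).1
  have hqsmono : StrictMono (fun n => q (s n)) := strictMono_nat_of_lt_succ fun n => (hGood n).2.1
  -- the key approximation fact
  have key : ∀ i, |(q i : ℝ) * θ - (pnum i : ℝ)| ≤ 1 / (q (i+1) : ℝ) := by
    intro i
    have h := happrox i
    have hqi := hqR i
    have hqi1 := hqR (i+1)
    calc |(q i : ℝ) * θ - (pnum i : ℝ)| = (q i : ℝ) * |θ - (pnum i : ℝ) / (q i : ℝ)| := by
          rw [← abs_of_pos hqi, ← abs_mul]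
          congr 1
          rw [abs_of_pos hqi]
          field_simp
      _ ≤ (q i : ℝ) * (1 / ((q i : ℝ) * (q (i+1) : ℝ))) := by
          exact mul_le_mul_of_nonneg_left h hqi.le
      _ = 1 / (q (i+1) : ℝ) := by field_simp
  -- term bound
  have tb : ∀ c i : ℕ, ‖1 - Complex.exp
        (2 * (Real.pi : ℂ) * Complex.I * (((c:ℝ) * (q i : ℝ) * θ : ℝ) : ℂ))‖
      ≤ 2 * Real.pi * (c : ℝ) / (q (i+1) : ℝ) := by
    intro c i
    refine (aux_abs_le_int ((c:ℝ) * (q i : ℝ) * θ) ((c : ℤ) * pnum i)).trans ?_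
    have h1 : |(c:ℝ) * (q i:ℝ) * θ - (((c:ℤ) * pnum i : ℤ) : ℝ)|
        = (c : ℝ) * |(q i : ℝ) * θ - (pnum i : ℝ)| := by
      push_cast
      rw [show (c:ℝ) * (q i:ℝ) * θ - (c:ℝ) * (pnum i : ℝ)
            = (c:ℝ) * ((q i:ℝ) * θ - (pnum i : ℝ)) by ring, abs_mul, Nat.abs_cast]
    rw [h1]
    calc 2 * Real.pi * ((c:ℝ) * |(q i : ℝ) * θ - (pnum i : ℝ)|)
        ≤ 2 * Real.pi * ((c:ℝ) * (1 / (q (i+1) : ℝ))) := by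
          have hπ := Real.pi_pos
          gcongr
          exact key i
      _ = 2 * Real.pi * (c:ℝ) / (q (i+1) : ℝ) := by ring
  refine ⟨s, hsmono, (fun p => q (s p)), hqsmono, fun p => hq _, fun p hp => ?_⟩
  beta_reduce
  have hεp := hεpos p
  have hpR : (1:ℝ) ≤ (p : ℝ) := by exact_mod_cast hp
  have hGp : Good q ε (s (p-1)) p (s p) := by
    have h := hGood (p-1)
    rwa [Nat.sub_add_cancel hp] at h
  set a : ℕ → ℝ := fun n => ‖1 - Complex.exp
      (2 * Real.pi * Complex.I * (q (s n) : ℂ) * (q (s p) : ℂ) * (θ : ℂ))‖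
      * (p : ℝ) ^ (q (s n)) with ha
  have hDpos : (0:ℝ) < q (s p + 1) := hqR _
  -- two bounds on the exponential factor
  have abs_le₁ : ∀ n, ‖1 - Complex.exp
        (2 * Real.pi * Complex.I * (q (s n) : ℂ) * (q (s p) : ℂ) * (θ : ℂ))‖
      ≤ 2 * Real.pi * (q (s n) : ℝ) / (q (s p + 1) : ℝ) := by
    intro n
    have e1 : 2 * (Real.pi:ℂ) * Complex.I * (q (s n) : ℂ) * (q (s p) : ℂ) * (θ : ℂ)
        = 2 * (Real.pi : ℂ) * Complex.I * (((q (s n) : ℝ) * (q (s p) : ℝ) * θ : ℝ) : ℂ) := by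
      push_cast; ring
    rw [e1]
    exact tb (q (s n)) (s p)
  have abs_le₂ : ∀ n, ‖1 - Complex.exp
        (2 * Real.pi * Complex.I * (q (s n) : ℂ) * (q (s p) : ℂ) * (θ : ℂ))‖
      ≤ 2 * Real.pi * (q (s p) : ℝ) / (q (s n + 1) : ℝ) := by
    intro n
    have e1 : 2 * (Real.pi:ℂ) * Complex.I * (q (s n) : ℂ) * (q (s p) : ℂ) * (θ : ℂ)
        = 2 * (Real.pi : ℂ) * Complex.I * (((q (s p) : ℝ) * (q (s n) : ℝ) * θ : ℝ) : ℂ) := by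
      push_cast; ring
    rw [e1]
    exact tb (q (s p)) (s n)
  have abs_le₀ : ‖1 - Complex.exp
        (2 * Real.pi * Complex.I * (q (s p) : ℂ) * (θ : ℂ))‖
      ≤ 2 * Real.pi * 1 / (q (s p + 1) : ℝ) := by
    have e1 : 2 * (Real.pi:ℂ) * Complex.I * (q (s p) : ℂ) * (θ : ℂ)
        = 2 * (Real.pi : ℂ) * Complex.I * ((((1:ℕ):ℝ) * (q (s p) : ℝ) * θ : ℝ) : ℂ) := by
      push_cast; ring
    rw [e1]
    simpa using tb 1 (s p)
  -- from clause 3 of Good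
  have C3 : 8 * Real.pi * ((p:ℝ) + 1) / ε p * (Real.exp 1 * ((p:ℝ) + 1)) ^ (q (s p))
      ≤ (q (s p + 1) : ℝ) := by
    have h := hGp.2.2.1
    push_cast at h ⊢
    convert h using 3 <;> push_cast <;> ring
  have hX : (q (s p) : ℝ) * (p:ℝ) ^ (q (s p)) ≤ (Real.exp 1 * ((p:ℝ) + 1)) ^ (q (s p)) := by
    rw [mul_pow]
    have h1 : (q (s p) : ℝ) ≤ Real.exp 1 ^ (q (s p)) := by
      rw [Real.exp_one_pow]
      have := Real.add_one_le_exp ((q (s p) : ℝ))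
      linarith
    have h2 : (p:ℝ) ^ (q (s p)) ≤ ((p:ℝ) + 1) ^ (q (s p)) := by
      apply pow_le_pow_left₀ (by positivity) (by linarith)
    exact mul_le_mul h1 h2 (by positivity) (by positivity)
  have hD1 : 8 * Real.pi * ((p:ℝ) + 1) / ε p * ((q (s p) : ℝ) * (p:ℝ) ^ (q (s p)))
      ≤ (q (s p + 1) : ℝ) := by
    refine le_trans (mul_le_mul_of_nonneg_left hX (by positivity)) C3
  have hπ := Real.pi_pos
  have h1X : (1:ℝ) ≤ (q (s p) : ℝ) * (p:ℝ) ^ (q (s p)) := by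
    have := hq1 (s p)
    have h2 : (1:ℝ) ≤ (p:ℝ) ^ (q (s p)) := one_le_pow₀ hpR
    nlinarith
  -- head bound
  have hhead : ‖1 - Complex.exp
        (2 * Real.pi * Complex.I * (q (s p) : ℂ) * (θ : ℂ))‖ ≤ ε p / 4 := by
    refine abs_le₀.trans ?_
    have h8 : 8 * Real.pi / ε p ≤ (q (s p + 1) : ℝ) := by
      refine le_trans ?_ hD1
      calc 8 * Real.pi / ε p = 8 * Real.pi / ε p * 1 := (mul_one _).symm
        _ ≤ 8 * Real.pi / ε p * (((p:ℝ) + 1) * ((q (s p) : ℝ) * (p:ℝ) ^ (q (s p)))) := by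
            have h3 : (1:ℝ) ≤ ((p:ℝ) + 1) * ((q (s p) : ℝ) * (p:ℝ) ^ (q (s p))) := by nlinarith
            have h4 : (0:ℝ) ≤ 8 * Real.pi / ε p := by positivity
            nlinarith
        _ = 8 * Real.pi * ((p:ℝ) + 1) / ε p * ((q (s p) : ℝ) * (p:ℝ) ^ (q (s p))) := by ring
    rw [div_le_div_iff₀ hDpos (by norm_num : (0:ℝ) < 4)]
    have h5 := mul_le_mul_of_nonneg_left h8 hεp.le
    have h6 : ε p * (8 * Real.pi / ε p) = 8 * Real.pi := by field_simp
    rw [h6] at h5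
    linarith
  -- terms with n ≤ p
  have hterm_head : ∀ n, n ≤ p → a n ≤ ε p / (4 * ((p:ℝ) + 1)) := by
    intro n hn
    have hq_le : (q (s n) : ℝ) ≤ (q (s p) : ℝ) := by
      exact_mod_cast hqsmono.monotone hn
    have hpow_le : (p:ℝ) ^ (q (s n)) ≤ (p:ℝ) ^ (q (s p)) :=
      pow_le_pow_right₀ hpR (hqsmono.monotone hn)
    have h1 : a n ≤ 2 * Real.pi * (q (s n) : ℝ) / (q (s p + 1) : ℝ) * (p:ℝ) ^ (q (s n)) :=
      mul_le_mul_of_nonneg_right (abs_le₁ n) (by positivity)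
    have h2 : 2 * Real.pi * (q (s n) : ℝ) / (q (s p + 1) : ℝ) * (p:ℝ) ^ (q (s n))
        ≤ 2 * Real.pi * (q (s p) : ℝ) / (q (s p + 1) : ℝ) * (p:ℝ) ^ (q (s p)) := by
      gcongr
    have h3 : 2 * Real.pi * (q (s p) : ℝ) / (q (s p + 1) : ℝ) * (p:ℝ) ^ (q (s p))
        ≤ ε p / (4 * ((p:ℝ) + 1)) := by
      rw [div_mul_eq_mul_div, div_le_div_iff₀ hDpos (by positivity)]
      -- 2π * q(sp) * p^(q sp) * (4(p+1)) ≤ ε p * q(sp+1)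
      have h5 := mul_le_mul_of_nonneg_left hD1 hεp.le
      have h6 : ε p * (8 * Real.pi * ((p:ℝ) + 1) / ε p * ((q (s p) : ℝ) * (p:ℝ) ^ (q (s p))))
          = 8 * Real.pi * ((p:ℝ) + 1) * ((q (s p) : ℝ) * (p:ℝ) ^ (q (s p))) := by
        field_simp
      rw [h6] at h5
      nlinarith
    linarith
  -- terms with n > p
  have htail : ∀ n, p < n → a n ≤ ε p * (1/2 : ℝ) ^ (n + 1) := by
    intro n hn
    obtain ⟨t, rfl⟩ : ∃ t, n = t + 1 := ⟨n - 1, by omega⟩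
    have hpt : p ≤ t := by omega
    have hG := (hGood t).2.2.2 p hp (by omega)
    set D' : ℝ := (q (s (t+1) + 1) : ℝ) with hD'
    have hD'pos : 0 < D' := hqR _
    have hqst : (q (s p) : ℝ) ≤ (q (s t) : ℝ) := by
      exact_mod_cast hqsmono.monotone hpt
    have hqstpos := hqR (s t)
    set P : ℝ := (p:ℝ) ^ (q (s (t+1))) with hP
    have hPpos : 0 < P := by positivity
    have h1 : a (t+1) ≤ 2 * Real.pi * (q (s p) : ℝ) / D' * P :=
      mul_le_mul_of_nonneg_right (abs_le₂ (t+1)) (by positivity)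
    have hG' : 4 * Real.pi * (q (s t) : ℝ) * 2 ^ (t+1) / ε p * P ≤ D' := by
      have := hG
      push_cast at this
      convert this using 2 <;> push_cast <;> ring
    have h2 : 2 * Real.pi * (q (s p) : ℝ) / D' * P ≤ ε p * (1/2 : ℝ) ^ (t + 2) := by
      rw [div_mul_eq_mul_div, div_le_iff₀ hD'pos]
      have hhalf : (2:ℝ) ^ (t+1) * (1/2 : ℝ) ^ (t+2) = 1/2 := by
        rw [pow_succ (1/2:ℝ) (t+1), ← mul_assoc, ← mul_pow]
        norm_num
      have hid : ε p * (1/2 : ℝ) ^ (t+2) * (4 * Real.pi * (q (s t) : ℝ) * 2 ^ (t+1) / ε p * P)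
          = 2 * Real.pi * (q (s t) : ℝ) * P := by
        have e : ε p * (1/2 : ℝ) ^ (t+2) * (4 * Real.pi * (q (s t) : ℝ) * 2 ^ (t+1) / ε p * P)
            = (ε p / ε p) * ((2:ℝ) ^ (t+1) * (1/2:ℝ) ^ (t+2)) * (4 * Real.pi * (q (s t) : ℝ) * P) := by
          ring
        rw [e, div_self (ne_of_gt hεp), hhalf]
        ring
      calc 2 * Real.pi * (q (s p) : ℝ) * P ≤ 2 * Real.pi * (q (s t) : ℝ) * P := by
            gcongr
        _ = ε p * (1/2 : ℝ) ^ (t+2) * (4 * Real.pi * (q (s t) : ℝ) * 2 ^ (t+1) / ε p * P) := hid.symm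
        _ ≤ ε p * (1/2 : ℝ) ^ (t+2) * D' := by
            exact mul_le_mul_of_nonneg_left hG' (by positivity)
    calc a (t+1) ≤ 2 * Real.pi * (q (s p) : ℝ) / D' * P := h1
      _ ≤ ε p * (1/2 : ℝ) ^ (t + 2) := h2
      _ = ε p * (1/2 : ℝ) ^ (t + 1 + 1) := by ring_nf
  -- nonnegativity and summability
  have hanonneg : ∀ n, 0 ≤ a n := fun n =>
    mul_nonneg (norm_nonneg _) (by positivity)
  have hgeo : Summable (fun n : ℕ => ε p * (1/2:ℝ) ^ (p+2) * (1/2:ℝ) ^ n) :=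
    (summable_geometric_of_lt_one (by norm_num) (by norm_num)).mul_left _
  have hsummable : Summable a := by
    rw [← summable_nat_add_iff (p+1)]
    refine Summable.of_nonneg_of_le (fun n => hanonneg _) (fun n => ?_) hgeo
    calc a (n + (p+1)) ≤ ε p * (1/2:ℝ) ^ ((n + (p+1)) + 1) := htail _ (by omega)
      _ = ε p * (1/2:ℝ) ^ (p+2) * (1/2:ℝ) ^ n := by
          rw [show (n + (p+1)) + 1 = (p+2) + n by ring, pow_add]
          ring
  -- bounding the sums
  have hsum_head : ∑ i ∈ Finset.range (p+1), a i ≤ ε p / 4 := by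
    have h := Finset.sum_le_card_nsmul (Finset.range (p+1)) a (ε p / (4 * ((p:ℝ)+1)))
      (fun i hi => hterm_head i (Nat.lt_succ_iff.1 (Finset.mem_range.1 hi)))
    rw [Finset.card_range, nsmul_eq_mul] at h
    have heq : ((p+1 : ℕ) : ℝ) * (ε p / (4 * ((p:ℝ)+1))) = ε p / 4 := by
      have hne : ((p:ℝ) + 1) ≠ 0 := by positivity
      push_cast
      field_simp
    rw [heq] at h
    exact h
  have hshift : Summable (fun n => a (n + (p+1))) := by
    rw [summable_nat_add_iff (p+1)]
    exact hsummable
  have hsum_tail : ∑' n : ℕ, a (n + (p+1)) ≤ ε p / 4 := by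
    have hle : ∑' n : ℕ, a (n + (p+1)) ≤ ∑' n : ℕ, ε p * (1/2:ℝ) ^ (p+2) * (1/2:ℝ) ^ n := by
      refine Summable.tsum_le_tsum (fun n => ?_) hshift hgeo
      calc a (n + (p+1)) ≤ ε p * (1/2:ℝ) ^ ((n + (p+1)) + 1) := htail _ (by omega)
        _ = ε p * (1/2:ℝ) ^ (p+2) * (1/2:ℝ) ^ n := by
            rw [show (n + (p+1)) + 1 = (p+2) + n by ring, pow_add]
            ring
    have hgeoval : ∑' n : ℕ, ε p * (1/2:ℝ) ^ (p+2) * (1/2:ℝ) ^ n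
        = ε p * (1/2:ℝ) ^ (p+2) * 2 := by
      rw [tsum_mul_left, tsum_geometric_of_lt_one (by norm_num) (by norm_num)]
      norm_num
    have hp8 : (1/2:ℝ) ^ (p+2) ≤ 1/8 := by
      calc (1/2:ℝ) ^ (p+2) ≤ (1/2:ℝ) ^ 3 := by
            apply pow_le_pow_of_le_one (by norm_num) (by norm_num) (by omega)
        _ = 1/8 := by norm_num
    rw [hgeoval] at hle
    nlinarith
  refine ⟨hsummable, ?_⟩
  have hdecomp := Summable.sum_add_tsum_nat_add (f := a) (p+1) hsummable
  rw [← hdecomp]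
  linarith
end
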